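/- arXiv:2509.08107 — 6 statements merged into one kernel-verified Lean document; each statement's English description precedes it below -/
import Mathlib

section
/- Suppose I ≥ 2, let 0 < ε ≤ M, set the step size η = ε/M² and the number of rounds T = ⌈2·M²·ln(I)/ε²⌉, and run the Hedge algorithm where in every round t ∈ {1,…,T} the point θ_t is a best response to p_t (i.e. R(p_t,θ_t) = f(p_t)). Then the averaged output p̄_T = (1/T)·Σ_{t=1}^T p_t is an ε-minimax decision rule: sup_{θ∈Θ} R(p̄_T,θ) ≤ v̄ + ε, where v̄ = inf_{p∈Δ} sup_{θ∈Θ} R(p,θ). -/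
/-!
Hedge controls the potential `Φ_t = ∑ᵢ w_{i,t}` from both sides. For losses in `[0, M]` the
bound `e^{-x} ≤ 1 - x + x²/2` gives `Φ_t ≤ Φ_{t-1} · exp (-η R(p_t, θ_t) + η²M²/2)`, while
`Φ_T ≥ w_{i,T} = exp (-η ∑ₜ R(i, θ_t))`; comparing the two is the regret bound
`∑ₜ R(p_t, θ_t) ≤ ∑ₜ R(i, θ_t) + ln I / η + T η M² / 2` for every pure strategy `i`.
Against best responses `R(p_t, θ_t) = f(p_t) ≥ R(p_t, θ)` for every `θ`, and averaging the regret
bound over `i` with weights `q ∈ Δ` bounds its right side by `T f(q) + ln I / η + T η M² / 2`.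
Dividing by `T` gives `f(p̄_T) ≤ f(q) + ln I / (η T) + η M² / 2`, and with the chosen `η` and `T`
each error term is at most `ε / 2`.
-/

open Finset Real

lemma Real.exp_neg_le_one_sub_add_sq_div_two {x : ℝ} (hx : 0 ≤ x) :
    exp (-x) ≤ 1 - x + x ^ 2 / 2 := by
  have hpos : 0 < 1 + x + x ^ 2 / 2 := by positivity
  calc exp (-x) = (exp x)⁻¹ := exp_neg x
    _ ≤ (1 + x + x ^ 2 / 2)⁻¹ := inv_anti₀ hpos (quadratic_le_exp_of_nonneg hx)
    _ ≤ 1 - x + x ^ 2 / 2 := by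
      rw [inv_le_iff_one_le_mul₀ hpos]
      nlinarith [pow_nonneg hx 4]

lemma sum_mul_exp_neg_le {ι : Type*} [Fintype ι] {p x : ι → ℝ} (hp : p ∈ stdSimplex ℝ ι)
    {η M : ℝ} (hη : 0 ≤ η) (hx : ∀ i, 0 ≤ x i ∧ x i ≤ M) :
    ∑ i, p i * exp (-η * x i) ≤ exp (-η * ∑ i, p i * x i + η ^ 2 * M ^ 2 / 2) :=
  calc ∑ i, p i * exp (-η * x i) ≤ ∑ i, p i * (1 - η * x i + η ^ 2 * M ^ 2 / 2) := by
        gcongr with i _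
        · exact hp.1 i
        calc exp (-η * x i) ≤ 1 - η * x i + (η * x i) ^ 2 / 2 := by
              rw [neg_mul]
              exact exp_neg_le_one_sub_add_sq_div_two (mul_nonneg hη (hx i).1)
          _ ≤ 1 - η * x i + η ^ 2 * M ^ 2 / 2 := by
              rw [mul_pow]
              gcongr
              exacts [(hx i).1, (hx i).2]
    _ = 1 - η * ∑ i, p i * x i + η ^ 2 * M ^ 2 / 2 := by
        have hterm : ∀ i, p i * (1 - η * x i + η ^ 2 * M ^ 2 / 2) =
            p i - η * (p i * x i) + p i * (η ^ 2 * M ^ 2 / 2) := fun i ↦ by ring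
        rw [sum_congr rfl fun i _ ↦ hterm i, sum_add_distrib, sum_sub_distrib, ← mul_sum,
          ← sum_mul, hp.2, one_mul]
    _ ≤ exp (-η * ∑ i, p i * x i + η ^ 2 * M ^ 2 / 2) := by
        linarith [add_one_le_exp (-η * ∑ i, p i * x i + η ^ 2 * M ^ 2 / 2)]

section Hedge

variable {ι : Type*} {η M : ℝ} {ℓ w p : ℕ → ι → ℝ}

lemma hedge_weight_eq (hw0 : ∀ i, w 0 i = 1)
    (hw : ∀ t i, w (t + 1) i = w t i * exp (-η * ℓ (t + 1) i)) (t : ℕ) (i : ι) :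
    w t i = exp (-η * ∑ s ∈ Icc 1 t, ℓ s i) := by
  induction t with
  | zero => simp [hw0]
  | succ t ih =>
    rw [hw, ih, ← exp_add, sum_Icc_succ_top (Nat.le_add_left 1 t), mul_add]

lemma hedge_weight_pos (hw0 : ∀ i, w 0 i = 1)
    (hw : ∀ t i, w (t + 1) i = w t i * exp (-η * ℓ (t + 1) i)) (t : ℕ) (i : ι) : 0 < w t i :=
  hedge_weight_eq hw0 hw t i ▸ exp_pos _

variable [Fintype ι]

lemma hedge_mem_stdSimplex [Nonempty ι] (hw0 : ∀ i, w 0 i = 1)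
    (hw : ∀ t i, w (t + 1) i = w t i * exp (-η * ℓ (t + 1) i))
    (hp : ∀ t i, p (t + 1) i = w t i / ∑ j, w t j) (t : ℕ) :
    p (t + 1) ∈ stdSimplex ℝ ι := by
  have hW : 0 < ∑ j, w t j := sum_pos (fun j _ ↦ hedge_weight_pos hw0 hw t j) univ_nonempty
  refine ⟨fun i ↦ ?_, ?_⟩
  · rw [hp]
    exact div_nonneg (hedge_weight_pos hw0 hw t i).le hW.le
  · simp only [hp, ← sum_div, div_self hW.ne']

lemma hedge_potential_succ_le [Nonempty ι] (hw0 : ∀ i, w 0 i = 1)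
    (hw : ∀ t i, w (t + 1) i = w t i * exp (-η * ℓ (t + 1) i))
    (hp : ∀ t i, p (t + 1) i = w t i / ∑ j, w t j) (hη : 0 ≤ η)
    (hℓ : ∀ t i, 0 ≤ ℓ t i ∧ ℓ t i ≤ M) (t : ℕ) :
    ∑ i, w (t + 1) i ≤
      (∑ i, w t i) * exp (-η * ∑ i, p (t + 1) i * ℓ (t + 1) i + η ^ 2 * M ^ 2 / 2) := by
  have hW : 0 < ∑ j, w t j := sum_pos (fun j _ ↦ hedge_weight_pos hw0 hw t j) univ_nonempty
  have hsplit : ∑ i, w (t + 1) i = (∑ j, w t j) * ∑ i, p (t + 1) i * exp (-η * ℓ (t + 1) i) := by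
    simp only [hw, hp, mul_sum, ← mul_assoc, mul_div_cancel₀ _ hW.ne']
  rw [hsplit]
  gcongr
  exact sum_mul_exp_neg_le (hedge_mem_stdSimplex hw0 hw hp t) hη (hℓ (t + 1))

lemma hedge_potential_le [Nonempty ι] (hw0 : ∀ i, w 0 i = 1)
    (hw : ∀ t i, w (t + 1) i = w t i * exp (-η * ℓ (t + 1) i))
    (hp : ∀ t i, p (t + 1) i = w t i / ∑ j, w t j) (hη : 0 ≤ η)
    (hℓ : ∀ t i, 0 ≤ ℓ t i ∧ ℓ t i ≤ M) (T : ℕ) :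
    ∑ i, w T i ≤ Fintype.card ι *
      exp (-η * ∑ t ∈ Icc 1 T, ∑ i, p t i * ℓ t i + T * (η ^ 2 * M ^ 2 / 2)) := by
  induction T with
  | zero => simp [hw0]
  | succ T ih =>
    calc ∑ i, w (T + 1) i
        ≤ (∑ i, w T i) * exp (-η * ∑ i, p (T + 1) i * ℓ (T + 1) i + η ^ 2 * M ^ 2 / 2) :=
          hedge_potential_succ_le hw0 hw hp hη hℓ T
      _ ≤ Fintype.card ι *
            exp (-η * ∑ t ∈ Icc 1 T, ∑ i, p t i * ℓ t i + T * (η ^ 2 * M ^ 2 / 2)) *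
            exp (-η * ∑ i, p (T + 1) i * ℓ (T + 1) i + η ^ 2 * M ^ 2 / 2) := by gcongr
      _ = _ := by
          rw [mul_assoc, ← exp_add, sum_Icc_succ_top (Nat.le_add_left 1 T)]
          push_cast
          congr 2
          ring

lemma hedge_regret_le [Nonempty ι] (hw0 : ∀ i, w 0 i = 1)
    (hw : ∀ t i, w (t + 1) i = w t i * exp (-η * ℓ (t + 1) i))
    (hp : ∀ t i, p (t + 1) i = w t i / ∑ j, w t j) (hη : 0 < η)
    (hℓ : ∀ t i, 0 ≤ ℓ t i ∧ ℓ t i ≤ M) (T : ℕ) (i : ι) :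
    ∑ t ∈ Icc 1 T, ∑ j, p t j * ℓ t j ≤
      ∑ t ∈ Icc 1 T, ℓ t i + (log (Fintype.card ι) / η + T * (η * M ^ 2 / 2)) := by
  have hcard : (0 : ℝ) < Fintype.card ι := by exact_mod_cast Fintype.card_pos
  have hexp : exp (-η * ∑ t ∈ Icc 1 T, ℓ t i) ≤ exp (log (Fintype.card ι) +
      (-η * ∑ t ∈ Icc 1 T, ∑ j, p t j * ℓ t j + T * (η ^ 2 * M ^ 2 / 2))) := by
    rw [exp_add, exp_log hcard, ← hedge_weight_eq hw0 hw]
    exact (single_le_sum (fun j _ ↦ (hedge_weight_pos hw0 hw T j).le)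
      (mem_univ i)).trans (hedge_potential_le hw0 hw hp hη.le hℓ T)
  rw [exp_le_exp] at hexp
  rw [← mul_le_mul_iff_right₀ hη]
  field_simp
  linarith

end Hedge

section Minimax

variable {ι Θ : Type*} [Fintype ι] {R : ι → Θ → ℝ} {M : ℝ}

lemma bddAbove_range_sum_mul (hR : ∀ i θ, R i θ ≤ M) {q : ι → ℝ} (hq : q ∈ stdSimplex ℝ ι) :
    BddAbove (Set.range fun θ ↦ ∑ i, q i * R i θ) := by
  refine ⟨M, ?_⟩
  rintro _ ⟨θ, rfl⟩
  calc ∑ i, q i * R i θ ≤ ∑ i, q i * M := by gcongr with i _; exacts [hq.1 i, hR i θ]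
    _ = M := by rw [← sum_mul, hq.2, one_mul]

lemma le_sum_mul_add_of_forall_le {q b : ι → ℝ} (hq : q ∈ stdSimplex ℝ ι) {a B : ℝ}
    (h : ∀ i, a ≤ b i + B) : a ≤ ∑ i, q i * b i + B :=
  calc a = ∑ i, q i * a := by rw [← sum_mul, hq.2, one_mul]
    _ ≤ ∑ i, q i * (b i + B) := by gcongr with i _; exacts [hq.1 i, h i]
    _ = ∑ i, q i * b i + B := by simp only [mul_add, sum_add_distrib, ← sum_mul, hq.2, one_mul]

lemma iSup_average_le_of_regret [Nonempty Θ] (hR : ∀ i θ, R i θ ≤ M) {p : ℕ → ι → ℝ}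
    {θ : ℕ → Θ} {T : ℕ} (hT : 0 < T) (hp : ∀ t ∈ Icc 1 T, p t ∈ stdSimplex ℝ ι)
    (hbr : ∀ t ∈ Icc 1 T, ∑ i, p t i * R i (θ t) = ⨆ θ', ∑ i, p t i * R i θ') {B : ℝ}
    (hregret : ∀ i, ∑ t ∈ Icc 1 T, ∑ j, p t j * R j (θ t) ≤ ∑ t ∈ Icc 1 T, R i (θ t) + B)
    {q : ι → ℝ} (hq : q ∈ stdSimplex ℝ ι) :
    ⨆ θ', ∑ i, ((1 / (T : ℝ)) * ∑ t ∈ Icc 1 T, p t i) * R i θ' ≤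
      (⨆ θ', ∑ i, q i * R i θ') + B / T := by
  refine ciSup_le fun θ' ↦ ?_
  have hbest : ∑ t ∈ Icc 1 T, ∑ i, p t i * R i θ' ≤ ∑ t ∈ Icc 1 T, ∑ i, p t i * R i (θ t) :=
    sum_le_sum fun t ht ↦ hbr t ht ▸ le_ciSup (bddAbove_range_sum_mul hR (hp t ht)) θ'
  have hmixed : ∑ t ∈ Icc 1 T, ∑ i, p t i * R i (θ t) ≤ T * (⨆ θ', ∑ i, q i * R i θ') + B :=
    calc ∑ t ∈ Icc 1 T, ∑ i, p t i * R i (θ t)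
        ≤ ∑ i, q i * ∑ t ∈ Icc 1 T, R i (θ t) + B := le_sum_mul_add_of_forall_le hq hregret
      _ = ∑ t ∈ Icc 1 T, ∑ i, q i * R i (θ t) + B := by simp_rw [mul_sum]; rw [sum_comm]
      _ ≤ ∑ t ∈ Icc 1 T, (⨆ θ', ∑ i, q i * R i θ') + B := by
          gcongr with t _
          exact le_ciSup (bddAbove_range_sum_mul hR hq) (θ t)
      _ = T * (⨆ θ', ∑ i, q i * R i θ') + B := by simp
  calc ∑ i, ((1 / (T : ℝ)) * ∑ t ∈ Icc 1 T, p t i) * R i θ'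
      = (1 / (T : ℝ)) * ∑ t ∈ Icc 1 T, ∑ i, p t i * R i θ' := by
        simp only [mul_assoc, sum_mul, ← mul_sum]
        rw [sum_comm]
    _ ≤ (1 / (T : ℝ)) * (T * (⨆ θ', ∑ i, q i * R i θ') + B) := by
        gcongr
        exact hbest.trans hmixed
    _ = (⨆ θ', ∑ i, q i * R i θ') + B / T := by
        field_simp

end Minimax

lemma hedge_error_le {ε M L T : ℝ} (hε : 0 < ε) (hM : 0 < M) (hT : 0 < T)
    (hTL : 2 * M ^ 2 * L / ε ^ 2 ≤ T) :
    (L / (ε / M ^ 2) + T * (ε / M ^ 2 * M ^ 2 / 2)) / T ≤ ε := by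
  rw [div_le_iff₀ (by positivity)] at hTL
  rw [div_le_iff₀ hT]
  field_simp
  nlinarith

theorem hedge_eps_minimax_general
    (I : ℕ) (hI : 2 ≤ I) (Θ : Type*) [Nonempty Θ] (M : ℝ) (hM : 0 < M)
    (R : Fin I → Θ → ℝ) (hR : ∀ i θ, 0 ≤ R i θ ∧ R i θ ≤ M)
    (ε : ℝ) (hε0 : 0 < ε)
    (η : ℝ) (hη : η = ε / M ^ 2)
    (T : ℕ) (hT : T = ⌈2 * M ^ 2 * Real.log I / ε ^ 2⌉₊)
    (θ : ℕ → Θ) (w : ℕ → Fin I → ℝ) (p : ℕ → Fin I → ℝ)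
    (hw0 : ∀ i, w 0 i = 1)
    (hw : ∀ t i, w (t + 1) i = w t i * Real.exp (-η * R i (θ (t + 1))))
    (hp : ∀ t i, p (t + 1) i = w t i / ∑ j, w t j)
    (hbr : ∀ t ∈ Finset.Icc 1 T,
      ∑ i, p t i * R i (θ t) = ⨆ θ' : Θ, ∑ i, p t i * R i θ') :
    (⨆ θ' : Θ, ∑ i, ((1 / (T : ℝ)) * ∑ t ∈ Finset.Icc 1 T, p t i) * R i θ')
      ≤ sInf {v : ℝ | ∃ q : Fin I → ℝ, (∀ i, 0 ≤ q i) ∧ ∑ i, q i = 1 ∧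
          v = ⨆ θ' : Θ, ∑ i, q i * R i θ'} + ε := by
  have : NeZero I := ⟨by omega⟩
  have hη0 : 0 < η := hη ▸ by positivity
  have hT0 : 0 < T := by
    have : 0 < log I := log_pos (by exact_mod_cast hI)
    rw [hT, Nat.ceil_pos]
    positivity
  have hp_mem : ∀ t ∈ Icc 1 T, p t ∈ stdSimplex ℝ (Fin I) := fun t ht ↦ by
    obtain ⟨s, rfl⟩ := Nat.exists_eq_add_of_le' (mem_Icc.1 ht).1
    exact hedge_mem_stdSimplex (ℓ := fun t i ↦ R i (θ t)) hw0 hw hp s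
  have hregret := hedge_regret_le hw0 hw hp hη0 (fun t i ↦ hR i (θ t)) T
  rw [Fintype.card_fin] at hregret
  have herror := hedge_error_le hε0 hM (Nat.cast_pos.2 hT0) (hT ▸ Nat.le_ceil _)
  rw [← hη] at herror
  rw [← sub_le_iff_le_add]
  have hp1 := hp_mem 1 (mem_Icc.2 ⟨le_rfl, hT0⟩)
  refine le_csInf ⟨_, p 1, hp1.1, hp1.2, rfl⟩ ?_
  rintro _ ⟨q, hq0, hq1, rfl⟩
  rw [sub_le_iff_le_add]
  exact (iSup_average_le_of_regret (fun i θ ↦ (hR i θ).2) hT0 hp_mem hbr hregret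
    ⟨hq0, hq1⟩).trans (by gcongr)

/-- ε-minimax via Hedge: with step size `η = ε/M²` and `T = ⌈2 M² ln I / ε²⌉`
rounds, running the Hedge algorithm against best responses yields an averaged
output `p̄_T` with `sup_θ R(p̄_T,θ) ≤ v̄ + ε`. -/
theorem hedge_eps_minimax
    (I : ℕ) (hI : 2 ≤ I) (Θ : Type*) [Nonempty Θ] (M : ℝ) (hM : 0 < M)
    (R : Fin I → Θ → ℝ) (hR : ∀ i θ, 0 ≤ R i θ ∧ R i θ ≤ M)
    (ε : ℝ) (hε0 : 0 < ε) (hεM : ε ≤ M)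
    (η : ℝ) (hη : η = ε / M ^ 2)
    (T : ℕ) (hT : T = ⌈2 * M ^ 2 * Real.log I / ε ^ 2⌉₊)
    (θ : ℕ → Θ) (w : ℕ → Fin I → ℝ) (p : ℕ → Fin I → ℝ)
    (hw0 : ∀ i, w 0 i = 1)
    (hw : ∀ t i, w (t + 1) i = w t i * Real.exp (-η * R i (θ (t + 1))))
    (hp : ∀ t i, p (t + 1) i = w t i / ∑ j, w t j)
    (hbr : ∀ t ∈ Finset.Icc 1 T,
      ∑ i, p t i * R i (θ t) = ⨆ θ' : Θ, ∑ i, p t i * R i θ') :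
    (⨆ θ' : Θ, ∑ i, ((1 / (T : ℝ)) * ∑ t ∈ Finset.Icc 1 T, p t i) * R i θ')
      ≤ sInf {v : ℝ | ∃ q : Fin I → ℝ, (∀ i, 0 ≤ q i) ∧ ∑ i, q i = 1 ∧
          v = ⨆ θ' : Θ, ∑ i, q i * R i θ'} + ε :=
  hedge_eps_minimax_general I hI Θ M hM R hR ε hε0 η hη T hT θ w p hw0 hw hp hbr
end

section
/- Suppose I ≥ 2, let 0 < ε ≤ M, set η = ε/M² and T = ⌈2·M²·ln(I)/ε²⌉, and run the Hedge algorithm where in every round t ∈ {1,…,T} the point θ_t is a best response to p_t. Then the uniform empirical distribution over θ_1,…,θ_T is an ε-maximin strategy for nature: for every p ∈ Δ, (1/T)·Σ_{t=1}^T R(p,θ_t) ≥ v̄ − ε, where v̄ = inf_{p∈Δ} sup_{θ∈Θ} R(p,θ). -/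
/-!
Hedge keeps the potential `Φ_t = ∑ᵢ w_{i,t}` under control: since `exp (-x) ≤ 1 - x + x²/2`
for `x ≥ 0`, each round multiplies `Φ` by at most `exp (η²M²/2 - η R(p_t, θ_t))`, while `Φ_T`
is at least the weight `exp (-η ∑_t R(i, θ_t))` of any single action. Taking logarithms gives
the regret bound `∑_t R(p_t, θ_t) ≤ ∑_t R(q, θ_t) + ln I / η + T η M² / 2` against every mixed
strategy `q`. Because each `θ_t` is a best response, `R(p_t, θ_t) = f(p_t) ≥ v̄`, and the choice
of `η` and `T` makes the regret at most `T ε`.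
-/

open Finset Real

lemma sum_mul_exp_neg_le_exp {ι : Type*} [Fintype ι] {p x : ι → ℝ} (hp : p ∈ stdSimplex ℝ ι)
    {a : ℝ} (hx : ∀ i, 0 ≤ x i ∧ x i ≤ a) :
    ∑ i, p i * exp (-x i) ≤ exp (a ^ 2 / 2 - ∑ i, p i * x i) :=
  calc ∑ i, p i * exp (-x i) ≤ ∑ i, p i * (1 - x i + a ^ 2 / 2) := by
        gcongr with i
        · exact hp.1 i
        · calc exp (-x i) ≤ 1 - x i + x i ^ 2 / 2 := exp_neg_le_one_sub_add_sq_div_two (hx i).1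
            _ ≤ 1 - x i + a ^ 2 / 2 := by gcongr; exacts [(hx i).1, (hx i).2]
    _ = a ^ 2 / 2 - ∑ i, p i * x i + 1 := by
        simp only [mul_add, mul_sub, sum_add_distrib, sum_sub_distrib, ← sum_mul, hp.2]
        ring
    _ ≤ exp (a ^ 2 / 2 - ∑ i, p i * x i) := add_one_le_exp _

/-- `w t` is the weight vector after the losses `ℓ 1, …, ℓ t`, and `p (t + 1)` the mixed strategy
played against `ℓ (t + 1)`. -/
structure IsHedge {ι : Type*} [Fintype ι] (η : ℝ) (ℓ w p : ℕ → ι → ℝ) : Prop where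
  weight_zero : ∀ i, w 0 i = 1
  weight_succ : ∀ t i, w (t + 1) i = w t i * exp (-η * ℓ (t + 1) i)
  prob_succ : ∀ t i, p (t + 1) i = w t i / ∑ j, w t j

namespace IsHedge

variable {ι : Type*} [Fintype ι] {η M : ℝ} {ℓ w p : ℕ → ι → ℝ}

lemma weight_eq_exp (h : IsHedge η ℓ w p) (t : ℕ) (i : ι) :
    w t i = exp (-η * ∑ s ∈ Icc 1 t, ℓ s i) := by
  induction t with
  | zero => simp [h.weight_zero]
  | succ t ih =>
    rw [h.weight_succ, ih, ← exp_add, sum_Icc_succ_top (by omega)]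
    ring_nf

lemma sum_weight_pos [Nonempty ι] (h : IsHedge η ℓ w p) (t : ℕ) : 0 < ∑ i, w t i :=
  sum_pos (fun i _ ↦ h.weight_eq_exp t i ▸ exp_pos _) univ_nonempty

lemma prob_mem_stdSimplex [Nonempty ι] (h : IsHedge η ℓ w p) {t : ℕ} (ht : 1 ≤ t) :
    p t ∈ stdSimplex ℝ ι := by
  obtain ⟨t, rfl⟩ : ∃ s, t = s + 1 := ⟨t - 1, by omega⟩
  refine ⟨fun i ↦ ?_, ?_⟩
  · rw [h.prob_succ]
    exact div_nonneg (h.weight_eq_exp t i ▸ (exp_pos _).le) (h.sum_weight_pos t).le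
  · simp only [h.prob_succ, ← sum_div, div_self (h.sum_weight_pos t).ne']

lemma sum_weight_succ_le [Nonempty ι] (h : IsHedge η ℓ w p) (hη : 0 ≤ η)
    (hℓ : ∀ t i, 0 ≤ ℓ t i ∧ ℓ t i ≤ M) (t : ℕ) :
    ∑ i, w (t + 1) i ≤
      (∑ i, w t i) * exp ((η * M) ^ 2 / 2 - η * ∑ i, p (t + 1) i * ℓ (t + 1) i) :=
  calc ∑ i, w (t + 1) i = (∑ j, w t j) * ∑ i, p (t + 1) i * exp (-(η * ℓ (t + 1) i)) := by
        rw [mul_sum]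
        refine sum_congr rfl fun i _ ↦ ?_
        rw [h.weight_succ, h.prob_succ, neg_mul, ← mul_assoc,
          mul_div_cancel₀ _ (h.sum_weight_pos t).ne']
    _ ≤ (∑ j, w t j) * exp ((η * M) ^ 2 / 2 - ∑ i, p (t + 1) i * (η * ℓ (t + 1) i)) := by
        gcongr
        · exact (h.sum_weight_pos t).le
        · exact sum_mul_exp_neg_le_exp (h.prob_mem_stdSimplex (by omega)) fun i ↦
            ⟨mul_nonneg hη (hℓ _ i).1, mul_le_mul_of_nonneg_left (hℓ _ i).2 hη⟩
    _ = _ := by simp only [mul_left_comm _ η, ← mul_sum]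

lemma sum_weight_le [Nonempty ι] (h : IsHedge η ℓ w p) (hη : 0 ≤ η)
    (hℓ : ∀ t i, 0 ≤ ℓ t i ∧ ℓ t i ≤ M) (T : ℕ) :
    ∑ i, w T i ≤ Fintype.card ι *
      exp (T * ((η * M) ^ 2 / 2) - η * ∑ t ∈ Icc 1 T, ∑ i, p t i * ℓ t i) := by
  induction T with
  | zero => simp [h.weight_zero]
  | succ T ih =>
    calc ∑ i, w (T + 1) i
        ≤ (∑ i, w T i) * exp ((η * M) ^ 2 / 2 - η * ∑ i, p (T + 1) i * ℓ (T + 1) i) :=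
          h.sum_weight_succ_le hη hℓ T
      _ ≤ Fintype.card ι * exp (T * ((η * M) ^ 2 / 2) - η * ∑ t ∈ Icc 1 T, ∑ i, p t i * ℓ t i) *
            exp ((η * M) ^ 2 / 2 - η * ∑ i, p (T + 1) i * ℓ (T + 1) i) := by gcongr
      _ = _ := by
          rw [mul_assoc, ← exp_add, sum_Icc_succ_top (by omega)]
          push_cast
          ring_nf

lemma sum_le_sum_loss_add (h : IsHedge η ℓ w p) (hη : 0 < η)
    (hℓ : ∀ t i, 0 ≤ ℓ t i ∧ ℓ t i ≤ M) (T : ℕ) (i : ι) :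
    ∑ t ∈ Icc 1 T, ∑ j, p t j * ℓ t j ≤
      ∑ t ∈ Icc 1 T, ℓ t i + log (Fintype.card ι) / η + T * η * M ^ 2 / 2 := by
  have : Nonempty ι := ⟨i⟩
  have hexp := (h.weight_eq_exp T i).symm.trans_le <|
    (single_le_sum (fun j _ ↦ h.weight_eq_exp T j ▸ (exp_pos _).le) (mem_univ i)).trans
      (h.sum_weight_le hη.le hℓ T)
  rw [← exp_log (Nat.cast_pos.2 Fintype.card_pos), ← exp_add, exp_le_exp] at hexp
  refine le_of_mul_le_mul_left ?_ hη
  rw [mul_add, mul_add, mul_div_cancel₀ _ hη.ne']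
  linarith

lemma regret_le (h : IsHedge η ℓ w p) (hη : 0 < η) (hℓ : ∀ t i, 0 ≤ ℓ t i ∧ ℓ t i ≤ M)
    (T : ℕ) {q : ι → ℝ} (hq : q ∈ stdSimplex ℝ ι) :
    ∑ t ∈ Icc 1 T, ∑ i, p t i * ℓ t i ≤
      ∑ t ∈ Icc 1 T, ∑ i, q i * ℓ t i + log (Fintype.card ι) / η + T * η * M ^ 2 / 2 :=
  calc ∑ t ∈ Icc 1 T, ∑ i, p t i * ℓ t i = ∑ i, q i * ∑ t ∈ Icc 1 T, ∑ j, p t j * ℓ t j := by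
        rw [← sum_mul, hq.2, one_mul]
    _ ≤ ∑ i, q i *
          (∑ t ∈ Icc 1 T, ℓ t i + log (Fintype.card ι) / η + T * η * M ^ 2 / 2) := by
        gcongr with i
        exacts [hq.1 i, h.sum_le_sum_loss_add hη hℓ T i]
    _ = _ := by
        simp only [mul_add, sum_add_distrib, ← sum_mul, hq.2, one_mul, mul_sum]
        rw [sum_comm]

end IsHedge

section Minimax

variable {ι Θ : Type*} [Fintype ι]

-- The paper's `f` and `v̄`.
noncomputable def worstCaseRisk (R : ι → Θ → ℝ) (q : ι → ℝ) : ℝ := ⨆ θ, ∑ i, q i * R i θ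

noncomputable def minimaxRisk (R : ι → Θ → ℝ) : ℝ :=
  sInf {v : ℝ | ∃ q : ι → ℝ, (∀ i, 0 ≤ q i) ∧ ∑ i, q i = 1 ∧ v = worstCaseRisk R q}

lemma minimaxRisk_le_worstCaseRisk {R : ι → Θ → ℝ} (hR : ∀ i θ, 0 ≤ R i θ) {q : ι → ℝ}
    (hq : q ∈ stdSimplex ℝ ι) : minimaxRisk R ≤ worstCaseRisk R q := by
  refine csInf_le ⟨0, ?_⟩ ⟨q, hq.1, hq.2, rfl⟩
  rintro _ ⟨q', hq', -, rfl⟩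
  exact iSup_nonneg fun θ ↦ sum_nonneg fun i _ ↦ mul_nonneg (hq' i) (hR i θ)

end Minimax

theorem hedge_eps_maximin_general
    (I : ℕ) (hI : 2 ≤ I) (Θ : Type*) (M : ℝ) (hM : 0 < M)
    (R : Fin I → Θ → ℝ) (hR : ∀ i θ, 0 ≤ R i θ ∧ R i θ ≤ M)
    (ε : ℝ) (hε0 : 0 < ε)
    (η : ℝ) (hη : η = ε / M ^ 2)
    (T : ℕ) (hT : T = ⌈2 * M ^ 2 * Real.log I / ε ^ 2⌉₊)
    (θ : ℕ → Θ) (w : ℕ → Fin I → ℝ) (p : ℕ → Fin I → ℝ)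
    (hw0 : ∀ i, w 0 i = 1)
    (hw : ∀ t i, w (t + 1) i = w t i * Real.exp (-η * R i (θ (t + 1))))
    (hp : ∀ t i, p (t + 1) i = w t i / ∑ j, w t j)
    (hbr : ∀ t ∈ Finset.Icc 1 T,
      ∑ i, p t i * R i (θ t) = ⨆ θ' : Θ, ∑ i, p t i * R i θ') :
    ∀ q : Fin I → ℝ, (∀ i, 0 ≤ q i) → ∑ i, q i = 1 →
      (1 / (T : ℝ)) * ∑ t ∈ Finset.Icc 1 T, ∑ i, q i * R i (θ t)
        ≥ sInf {v : ℝ | ∃ q' : Fin I → ℝ, (∀ i, 0 ≤ q' i) ∧ ∑ i, q' i = 1 ∧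
            v = ⨆ θ' : Θ, ∑ i, q' i * R i θ'} - ε := by
  intro q hq hq1
  have : Nonempty (Fin I) := ⟨⟨0, by omega⟩⟩
  have hedge : IsHedge η (fun t i ↦ R i (θ t)) w p := ⟨hw0, hw, hp⟩
  have hη0 : 0 < η := by rw [hη]; positivity
  have hlog : 0 < log I := log_pos (by exact_mod_cast hI)
  have hTε : 2 * M ^ 2 * log I ≤ T * ε ^ 2 := by
    rw [← div_le_iff₀ (by positivity), hT]
    exact Nat.le_ceil _
  have hT0 : (0 : ℝ) < T := by
    rw [hT, Nat.cast_pos, Nat.ceil_pos]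
    positivity
  have hregret := hedge.regret_le hη0 (fun t i ↦ hR i (θ t)) T ⟨hq, hq1⟩
  rw [Fintype.card_fin] at hregret
  have hvalue : T * minimaxRisk R ≤ ∑ t ∈ Icc 1 T, ∑ i, p t i * R i (θ t) := by
    have := card_nsmul_le_sum (Icc 1 T) (fun t ↦ ∑ i, p t i * R i (θ t)) (minimaxRisk R)
      fun t ht ↦ by
        rw [hbr t ht]
        exact minimaxRisk_le_worstCaseRisk (fun i θ ↦ (hR i θ).1)
          (hedge.prob_mem_stdSimplex (mem_Icc.1 ht).1)
    simpa using this
  have hparam : log I / η + T * η * M ^ 2 / 2 ≤ T * ε := by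
    rw [hη]
    field_simp
    linarith
  change _ ≥ minimaxRisk R - ε
  rw [ge_iff_le, one_div_mul_eq_div, le_div_iff₀ hT0]
  linarith

/-- ε-maximin strategy for nature via Hedge: with `η = ε/M²` and
`T = ⌈2 M² ln I / ε²⌉`, the uniform empirical distribution over nature's best
responses `θ_1,…,θ_T` satisfies `(1/T) Σ_t R(p,θ_t) ≥ v̄ − ε` for every `p` in
the simplex. -/
theorem hedge_eps_maximin
    (I : ℕ) (hI : 2 ≤ I) (Θ : Type*) [Nonempty Θ] (M : ℝ) (hM : 0 < M)
    (R : Fin I → Θ → ℝ) (hR : ∀ i θ, 0 ≤ R i θ ∧ R i θ ≤ M)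
    (ε : ℝ) (hε0 : 0 < ε) (hεM : ε ≤ M)
    (η : ℝ) (hη : η = ε / M ^ 2)
    (T : ℕ) (hT : T = ⌈2 * M ^ 2 * Real.log I / ε ^ 2⌉₊)
    (θ : ℕ → Θ) (w : ℕ → Fin I → ℝ) (p : ℕ → Fin I → ℝ)
    (hw0 : ∀ i, w 0 i = 1)
    (hw : ∀ t i, w (t + 1) i = w t i * Real.exp (-η * R i (θ (t + 1))))
    (hp : ∀ t i, p (t + 1) i = w t i / ∑ j, w t j)
    (hbr : ∀ t ∈ Finset.Icc 1 T,
      ∑ i, p t i * R i (θ t) = ⨆ θ' : Θ, ∑ i, p t i * R i θ') :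
    ∀ q : Fin I → ℝ, (∀ i, 0 ≤ q i) → ∑ i, q i = 1 →
      (1 / (T : ℝ)) * ∑ t ∈ Finset.Icc 1 T, ∑ i, q i * R i (θ t)
        ≥ sInf {v : ℝ | ∃ q' : Fin I → ℝ, (∀ i, 0 ≤ q' i) ∧ ∑ i, q' i = 1 ∧
            v = ⨆ θ' : Θ, ∑ i, q' i * R i θ'} - ε :=
  hedge_eps_maximin_general I hI Θ M hM R hR ε hε0 η hη T hT θ w p hw0 hw hp hbr
end

section
/- Approximation of the minimax value by the Hedge trajectory: suppose I ≥ 2, let 0 < ε ≤ M, set η = ε/M² and T = ⌈2·M²·ln(I)/ε²⌉, and run the Hedge algorithm where in every round t ∈ {1,…,T} the point θ_t is a best response to p_t. Define v̄^ε = (1/T)·Σ_{t=1}^T R(p_t,θ_t). Then v̄ ≤ sup_{θ∈Θ} R(p̄_T,θ) ≤ v̄^ε ≤ v̄ + ε, where p̄_T = (1/T)·Σ_{t=1}^T p_t and v̄ = inf_{p∈Δ} f(p). -/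
/-!
The potential `Φ_t = ∑ᵢ w_{i,t}` of Hedge shrinks in round `t` by at least the factor
`exp (-η R(p_t, θ_t) + η² M² / 2)`, because `e^{-x} ≤ 1 - x + x²/2` for `x ≥ 0`; on the other hand
`Φ_T ≥ w_{i,T} = exp (-η ∑_t R(i, θ_t))`. Taking logarithms bounds the regret against every pure,
hence every mixed, strategy `q` by `log I / η + T η M² / 2`, which is at most `T ε` for the given
`η` and `T`. Since `∑_t R(q, θ_t) ≤ T f(q)`, this gives `v̄^ε ≤ f(q) + ε` for all `q`. The middle
inequality is the convexity of `f` together with the best-response property, and the first one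
holds because `p̄_T` lies in the simplex.
-/

open Finset Real

lemma sum_mul_exp_neg_mul_le {ι : Type*} [Fintype ι] {M η : ℝ} {p ℓ : ι → ℝ}
    (hp : p ∈ stdSimplex ℝ ι) (hη : 0 ≤ η) (hℓ : ∀ i, 0 ≤ ℓ i ∧ ℓ i ≤ M) :
    ∑ i, p i * exp (-η * ℓ i) ≤ exp (-η * ∑ i, p i * ℓ i + η ^ 2 * M ^ 2 / 2) := by
  have hterm (i : ι) : exp (-η * ℓ i) ≤ 1 - η * ℓ i + η ^ 2 * M ^ 2 / 2 := by
    have hsq : (η * ℓ i) ^ 2 ≤ (η * M) ^ 2 :=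
      pow_le_pow_left₀ (mul_nonneg hη (hℓ i).1) (mul_le_mul_of_nonneg_left (hℓ i).2 hη) 2
    rw [neg_mul]
    linarith [exp_neg_le_one_sub_add_sq_div_two (mul_nonneg hη (hℓ i).1)]
  calc ∑ i, p i * exp (-η * ℓ i)
      ≤ ∑ i, p i * (1 - η * ℓ i + η ^ 2 * M ^ 2 / 2) :=
        sum_le_sum fun i _ => mul_le_mul_of_nonneg_left (hterm i) (hp.1 i)
    _ = 1 - η * ∑ i, p i * ℓ i + η ^ 2 * M ^ 2 / 2 := by
        simp only [mul_add, mul_sub, sum_add_distrib, sum_sub_distrib, ← sum_mul, mul_one,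
          hp.2, mul_left_comm _ η, ← mul_sum]
        ring
    _ ≤ exp (-η * ∑ i, p i * ℓ i + η ^ 2 * M ^ 2 / 2) := by
        linarith [add_one_le_exp (-η * ∑ i, p i * ℓ i + η ^ 2 * M ^ 2 / 2)]

section Hedge

variable {ι : Type*} [Fintype ι]

/-- Hedge with step size `η` against the losses `ℓ 1, ℓ 2, …`: rounds are numbered from `1`,
and `p 0` is unconstrained. -/
structure IsHedgeRun (η : ℝ) (ℓ w p : ℕ → ι → ℝ) : Prop where
  weight_zero : ∀ i, w 0 i = 1
  weight_succ : ∀ t i, w (t + 1) i = w t i * exp (-η * ℓ (t + 1) i)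
  play_succ : ∀ t i, p (t + 1) i = w t i / ∑ j, w t j

namespace IsHedgeRun

variable {η M : ℝ} {ℓ w p : ℕ → ι → ℝ}

lemma weight_eq (h : IsHedgeRun η ℓ w p) (t : ℕ) (i : ι) :
    w t i = exp (-η * ∑ s ∈ Icc 1 t, ℓ s i) := by
  induction t with
  | zero => simp [h.weight_zero]
  | succ t ih =>
    rw [h.weight_succ, ih, ← exp_add, sum_Icc_succ_top (by omega), mul_add]

lemma sum_weight_pos [Nonempty ι] (h : IsHedgeRun η ℓ w p) (t : ℕ) : 0 < ∑ j, w t j :=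
  sum_pos (fun j _ => h.weight_eq t j ▸ exp_pos _) univ_nonempty

lemma play_mem_stdSimplex [Nonempty ι] (h : IsHedgeRun η ℓ w p) {t : ℕ} (ht : 1 ≤ t) :
    p t ∈ stdSimplex ℝ ι := by
  obtain ⟨t, rfl⟩ := Nat.exists_eq_add_of_le' ht
  refine ⟨fun i => ?_, ?_⟩
  · rw [h.play_succ, h.weight_eq]
    exact div_nonneg (exp_pos _).le (h.sum_weight_pos t).le
  · simp only [h.play_succ, ← sum_div, div_self (h.sum_weight_pos t).ne']

lemma sum_weight_succ_le [Nonempty ι] (h : IsHedgeRun η ℓ w p) (hη : 0 ≤ η)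
    (hℓ : ∀ t i, 0 ≤ ℓ t i ∧ ℓ t i ≤ M) (t : ℕ) :
    ∑ j, w (t + 1) j ≤
      (∑ j, w t j) * exp (-η * ∑ i, p (t + 1) i * ℓ (t + 1) i + η ^ 2 * M ^ 2 / 2) := by
  have hW := (h.sum_weight_pos t).ne'
  have hw : ∀ j, w t j = (∑ j, w t j) * p (t + 1) j := fun j => by
    rw [h.play_succ, mul_div_cancel₀ _ hW]
  calc ∑ j, w (t + 1) j = (∑ j, w t j) * ∑ j, p (t + 1) j * exp (-η * ℓ (t + 1) j) := by
        simp only [h.weight_succ, mul_sum, ← mul_assoc, ← hw]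
    _ ≤ _ := mul_le_mul_of_nonneg_left
        (sum_mul_exp_neg_mul_le (h.play_mem_stdSimplex (by omega)) hη (hℓ (t + 1)))
        (h.sum_weight_pos t).le

lemma sum_weight_le [Nonempty ι] (h : IsHedgeRun η ℓ w p) (hη : 0 ≤ η)
    (hℓ : ∀ t i, 0 ≤ ℓ t i ∧ ℓ t i ≤ M) (t : ℕ) :
    ∑ j, w t j ≤ Fintype.card ι *
      exp (-η * ∑ s ∈ Icc 1 t, ∑ i, p s i * ℓ s i + t * (η ^ 2 * M ^ 2 / 2)) := by
  induction t with
  | zero => simp [h.weight_zero]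
  | succ t ih =>
    calc ∑ j, w (t + 1) j
        ≤ (∑ j, w t j) * exp (-η * ∑ i, p (t + 1) i * ℓ (t + 1) i + η ^ 2 * M ^ 2 / 2) :=
          h.sum_weight_succ_le hη hℓ t
      _ ≤ (Fintype.card ι * exp (-η * ∑ s ∈ Icc 1 t, ∑ i, p s i * ℓ s i +
            t * (η ^ 2 * M ^ 2 / 2))) *
            exp (-η * ∑ i, p (t + 1) i * ℓ (t + 1) i + η ^ 2 * M ^ 2 / 2) := by gcongr
      _ = _ := by
          rw [mul_assoc, ← exp_add, sum_Icc_succ_top (by omega)]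
          push_cast
          ring_nf

lemma regret_le [Nonempty ι] (h : IsHedgeRun η ℓ w p) (hη : 0 < η)
    (hℓ : ∀ t i, 0 ≤ ℓ t i ∧ ℓ t i ≤ M) (T : ℕ) (i : ι) :
    ∑ t ∈ Icc 1 T, ∑ j, p t j * ℓ t j ≤
      ∑ t ∈ Icc 1 T, ℓ t i + log (Fintype.card ι) / η + T * η * M ^ 2 / 2 := by
  have hle : exp (-η * ∑ t ∈ Icc 1 T, ℓ t i) ≤ Fintype.card ι *
      exp (-η * ∑ t ∈ Icc 1 T, ∑ j, p t j * ℓ t j + T * (η ^ 2 * M ^ 2 / 2)) := by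
    rw [← h.weight_eq]
    exact (single_le_sum (fun j _ => (h.weight_eq T j ▸ exp_pos _).le) (mem_univ i)).trans
      (h.sum_weight_le hη.le hℓ T)
  have hlog := log_le_log (exp_pos _) hle
  rw [log_exp, log_mul (by simp) (exp_pos _).ne', log_exp] at hlog
  refine le_of_mul_le_mul_left ?_ hη
  rw [mul_add, mul_add, mul_div_cancel₀ _ hη.ne']
  linarith

lemma regret_le_of_mem_stdSimplex [Nonempty ι] (h : IsHedgeRun η ℓ w p) (hη : 0 < η)
    (hℓ : ∀ t i, 0 ≤ ℓ t i ∧ ℓ t i ≤ M) (T : ℕ) {q : ι → ℝ} (hq : q ∈ stdSimplex ℝ ι) :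
    ∑ t ∈ Icc 1 T, ∑ j, p t j * ℓ t j ≤
      ∑ t ∈ Icc 1 T, ∑ i, q i * ℓ t i + log (Fintype.card ι) / η + T * η * M ^ 2 / 2 := by
  calc ∑ t ∈ Icc 1 T, ∑ j, p t j * ℓ t j
      = ∑ i, q i * ∑ t ∈ Icc 1 T, ∑ j, p t j * ℓ t j := by rw [← sum_mul, hq.2, one_mul]
    _ ≤ ∑ i, q i * (∑ t ∈ Icc 1 T, ℓ t i + log (Fintype.card ι) / η + T * η * M ^ 2 / 2) :=
        sum_le_sum fun i _ => mul_le_mul_of_nonneg_left (h.regret_le hη hℓ T i) (hq.1 i)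
    _ = _ := by
        simp only [mul_add, sum_add_distrib, ← sum_mul, hq.2, one_mul, mul_sum]
        rw [sum_comm]

lemma average_loss_le [Nonempty ι] (h : IsHedgeRun η ℓ w p) {ε : ℝ} (hε : 0 < ε) (hM : 0 < M)
    (hη : η = ε / M ^ 2) (hℓ : ∀ t i, 0 ≤ ℓ t i ∧ ℓ t i ≤ M) {T : ℕ}
    (hT : 2 * M ^ 2 * log (Fintype.card ι) / ε ^ 2 ≤ T) {q : ι → ℝ} (hq : q ∈ stdSimplex ℝ ι) :
    1 / (T : ℝ) * ∑ t ∈ Icc 1 T, ∑ j, p t j * ℓ t j ≤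
      1 / (T : ℝ) * ∑ t ∈ Icc 1 T, ∑ i, q i * ℓ t i + ε := by
  rcases T.eq_zero_or_pos with rfl | hT0
  · simp [hε.le]
  have hη0 : 0 < η := by rw [hη]; positivity
  -- `η = ε / M²` makes each of the two terms of the regret bound at most `T ε / 2`
  have hlog : log (Fintype.card ι) / η ≤ T * ε / 2 := by
    rw [hη, div_div_eq_mul_div, div_le_iff₀ (by positivity)]
    rw [div_le_iff₀ (by positivity)] at hT
    nlinarith
  have hquad : T * η * M ^ 2 / 2 = T * ε / 2 := by rw [hη]; field_simp
  have hreg := h.regret_le_of_mem_stdSimplex hη0 hℓ T hq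
  rw [← mul_le_mul_iff_of_pos_left (by positivity : (0 : ℝ) < T), mul_add, ← mul_assoc,
    ← mul_assoc, mul_one_div_cancel (by positivity), one_mul, one_mul]
  linarith

end IsHedgeRun

end Hedge

section Game

variable {ι Θ τ : Type*} [Fintype ι] {M : ℝ} {R : ι → Θ → ℝ}

-- `maxRisk R` is the function `f` and `minimaxValue R` the value `v̄` of the game.
noncomputable def maxRisk (R : ι → Θ → ℝ) (q : ι → ℝ) : ℝ := ⨆ θ, ∑ i, q i * R i θ

noncomputable def minimaxValue (R : ι → Θ → ℝ) : ℝ :=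
  sInf {v : ℝ | ∃ q : ι → ℝ, (∀ i, 0 ≤ q i) ∧ ∑ i, q i = 1 ∧ v = maxRisk R q}

lemma maxRisk_nonneg (hR : ∀ i θ, 0 ≤ R i θ) {q : ι → ℝ} (hq : ∀ i, 0 ≤ q i) :
    0 ≤ maxRisk R q :=
  Real.iSup_nonneg fun θ => sum_nonneg fun i _ => mul_nonneg (hq i) (hR i θ)

lemma sum_mul_le_maxRisk (hR : ∀ i θ, R i θ ≤ M) {q : ι → ℝ} (hq : q ∈ stdSimplex ℝ ι) (θ : Θ) :
    ∑ i, q i * R i θ ≤ maxRisk R q := by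
  refine le_ciSup (f := fun θ => ∑ i, q i * R i θ) ⟨M, ?_⟩ θ
  rintro _ ⟨θ', rfl⟩
  calc ∑ i, q i * R i θ' ≤ ∑ i, q i * M := sum_le_sum fun i _ =>
        mul_le_mul_of_nonneg_left (hR i θ') (hq.1 i)
    _ = M := by rw [← sum_mul, hq.2, one_mul]

lemma minimaxValue_le (hR : ∀ i θ, 0 ≤ R i θ) {q : ι → ℝ} (hq : q ∈ stdSimplex ℝ ι) :
    minimaxValue R ≤ maxRisk R q := by
  refine csInf_le ⟨0, ?_⟩ ⟨q, hq.1, hq.2, rfl⟩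
  rintro _ ⟨q', hq', -, rfl⟩
  exact maxRisk_nonneg hR hq'

lemma le_minimaxValue [Nonempty ι] {a : ℝ} (h : ∀ q ∈ stdSimplex ℝ ι, a ≤ maxRisk R q) :
    a ≤ minimaxValue R := by
  classical
  obtain ⟨i⟩ := ‹Nonempty ι›
  refine le_csInf ⟨_, Pi.single i 1, (single_mem_stdSimplex ℝ i).1,
    (single_mem_stdSimplex ℝ i).2, rfl⟩ ?_
  rintro _ ⟨q, hq, hqs, rfl⟩
  exact h q ⟨hq, hqs⟩

lemma average_mem_stdSimplex {s : Finset τ} (hs : s.Nonempty) {p : τ → ι → ℝ}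
    (hp : ∀ t ∈ s, p t ∈ stdSimplex ℝ ι) :
    (fun i => 1 / (#s : ℝ) * ∑ t ∈ s, p t i) ∈ stdSimplex ℝ ι := by
  refine ⟨fun i => mul_nonneg (by positivity) (sum_nonneg fun t ht => (hp t ht).1 i), ?_⟩
  rw [← mul_sum, sum_comm, sum_congr rfl fun t ht => (hp t ht).2, sum_const, nsmul_one,
    one_div_mul_cancel (by simpa using hs.ne_empty)]

lemma maxRisk_average_le (hR : ∀ i θ, 0 ≤ R i θ ∧ R i θ ≤ M) {s : Finset τ} {p : τ → ι → ℝ}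
    (hp : ∀ t ∈ s, p t ∈ stdSimplex ℝ ι) :
    maxRisk R (fun i => 1 / (#s : ℝ) * ∑ t ∈ s, p t i) ≤
      1 / (#s : ℝ) * ∑ t ∈ s, maxRisk R (p t) := by
  refine Real.iSup_le (fun θ => ?_) (mul_nonneg (by positivity) (sum_nonneg fun t ht =>
    maxRisk_nonneg (fun i θ => (hR i θ).1) (hp t ht).1))
  calc ∑ i, 1 / (#s : ℝ) * (∑ t ∈ s, p t i) * R i θ
      = 1 / (#s : ℝ) * ∑ t ∈ s, ∑ i, p t i * R i θ := by
        simp only [mul_assoc, ← mul_sum, sum_mul]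
        rw [sum_comm]
    _ ≤ 1 / (#s : ℝ) * ∑ t ∈ s, maxRisk R (p t) := by
        gcongr with t ht
        exact sum_mul_le_maxRisk (fun i θ => (hR i θ).2) (hp t ht) θ

lemma average_sum_mul_le_maxRisk (hR : ∀ i θ, R i θ ≤ M) {q : ι → ℝ} (hq : q ∈ stdSimplex ℝ ι)
    {s : Finset τ} (hs : s.Nonempty) (θ : τ → Θ) :
    1 / (#s : ℝ) * ∑ t ∈ s, ∑ i, q i * R i (θ t) ≤ maxRisk R q := by
  have hcard : (0 : ℝ) < #s := by simpa using hs
  calc 1 / (#s : ℝ) * ∑ t ∈ s, ∑ i, q i * R i (θ t) ≤ 1 / (#s : ℝ) * ∑ _t ∈ s, maxRisk R q := by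
        gcongr with t
        exact sum_mul_le_maxRisk hR hq (θ t)
    _ = maxRisk R q := by
        rw [sum_const, nsmul_eq_mul, ← mul_assoc, one_div_mul_cancel hcard.ne', one_mul]

end Game

theorem hedge_minimax_value_approximation_general
    (I : ℕ) (hI : 2 ≤ I) (Θ : Type*) (M : ℝ) (hM : 0 < M)
    (R : Fin I → Θ → ℝ) (hR : ∀ i θ, 0 ≤ R i θ ∧ R i θ ≤ M)
    (ε : ℝ) (hε0 : 0 < ε)
    (η : ℝ) (hη : η = ε / M ^ 2)
    (T : ℕ) (hT : T = ⌈2 * M ^ 2 * Real.log I / ε ^ 2⌉₊)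
    (θ : ℕ → Θ) (w : ℕ → Fin I → ℝ) (p : ℕ → Fin I → ℝ)
    (hw0 : ∀ i, w 0 i = 1)
    (hw : ∀ t i, w (t + 1) i = w t i * Real.exp (-η * R i (θ (t + 1))))
    (hp : ∀ t i, p (t + 1) i = w t i / ∑ j, w t j)
    (hbr : ∀ t ∈ Finset.Icc 1 T,
      ∑ i, p t i * R i (θ t) = ⨆ θ' : Θ, ∑ i, p t i * R i θ') :
    sInf {v : ℝ | ∃ q : Fin I → ℝ, (∀ i, 0 ≤ q i) ∧ ∑ i, q i = 1 ∧
        v = ⨆ θ' : Θ, ∑ i, q i * R i θ'}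
      ≤ (⨆ θ' : Θ, ∑ i, ((1 / (T : ℝ)) * ∑ t ∈ Finset.Icc 1 T, p t i) * R i θ')
    ∧ (⨆ θ' : Θ, ∑ i, ((1 / (T : ℝ)) * ∑ t ∈ Finset.Icc 1 T, p t i) * R i θ')
      ≤ (1 / (T : ℝ)) * ∑ t ∈ Finset.Icc 1 T, ∑ i, p t i * R i (θ t)
    ∧ (1 / (T : ℝ)) * ∑ t ∈ Finset.Icc 1 T, ∑ i, p t i * R i (θ t)
      ≤ sInf {v : ℝ | ∃ q : Fin I → ℝ, (∀ i, 0 ≤ q i) ∧ ∑ i, q i = 1 ∧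
          v = ⨆ θ' : Θ, ∑ i, q i * R i θ'} + ε := by
  have : Nonempty (Fin I) := ⟨⟨0, by omega⟩⟩
  have hlogI : 0 < log I := log_pos (by exact_mod_cast hI)
  have hrounds : (Icc 1 T).Nonempty := nonempty_Icc.mpr (hT ▸ Nat.ceil_pos.mpr (by positivity))
  have hTge : 2 * M ^ 2 * log (Fintype.card (Fin I)) / ε ^ 2 ≤ T := by
    rw [Fintype.card_fin, hT]
    exact Nat.le_ceil _
  have hcard : (#(Icc 1 T) : ℝ) = T := by simp
  have hrun : IsHedgeRun η (fun t i => R i (θ t)) w p := ⟨hw0, hw, hp⟩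
  have hplay (t : ℕ) (ht : t ∈ Icc 1 T) : p t ∈ stdSimplex ℝ (Fin I) :=
    hrun.play_mem_stdSimplex (mem_Icc.mp ht).1
  set pbar : Fin I → ℝ := fun i => 1 / (T : ℝ) * ∑ t ∈ Icc 1 T, p t i
  have hpbar : pbar ∈ stdSimplex ℝ (Fin I) := by
    simpa only [hcard] using average_mem_stdSimplex hrounds hplay
  have hconvex : maxRisk R pbar ≤ 1 / (T : ℝ) * ∑ t ∈ Icc 1 T, maxRisk R (p t) := by
    simpa only [hcard] using maxRisk_average_le hR hplay
  have hregret : ∀ q ∈ stdSimplex ℝ (Fin I),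
      1 / (T : ℝ) * ∑ t ∈ Icc 1 T, ∑ i, p t i * R i (θ t) - ε ≤ maxRisk R q := fun q hq => by
    have hloss := hrun.average_loss_le hε0 hM hη (fun t i => hR i (θ t)) hTge hq
    have hrisk := average_sum_mul_le_maxRisk (fun i θ => (hR i θ).2) hq hrounds θ
    rw [hcard] at hrisk
    linarith
  refine ⟨minimaxValue_le (fun i θ => (hR i θ).1) hpbar, ?_,
    sub_le_iff_le_add.mp (le_minimaxValue hregret)⟩
  rw [sum_congr rfl hbr]
  exact hconvex

/-- Approximation of the minimax value by the Hedge trajectory: with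
`η = ε/M²` and `T = ⌈2 M² ln I / ε²⌉` and best responses `θ_t`, the quantity
`v̄^ε = (1/T) Σ_t R(p_t,θ_t)` satisfies
`v̄ ≤ sup_θ R(p̄_T,θ) ≤ v̄^ε ≤ v̄ + ε`. -/
theorem hedge_minimax_value_approximation
    (I : ℕ) (hI : 2 ≤ I) (Θ : Type*) [Nonempty Θ] (M : ℝ) (hM : 0 < M)
    (R : Fin I → Θ → ℝ) (hR : ∀ i θ, 0 ≤ R i θ ∧ R i θ ≤ M)
    (ε : ℝ) (hε0 : 0 < ε) (hεM : ε ≤ M)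
    (η : ℝ) (hη : η = ε / M ^ 2)
    (T : ℕ) (hT : T = ⌈2 * M ^ 2 * Real.log I / ε ^ 2⌉₊)
    (θ : ℕ → Θ) (w : ℕ → Fin I → ℝ) (p : ℕ → Fin I → ℝ)
    (hw0 : ∀ i, w 0 i = 1)
    (hw : ∀ t i, w (t + 1) i = w t i * Real.exp (-η * R i (θ (t + 1))))
    (hp : ∀ t i, p (t + 1) i = w t i / ∑ j, w t j)
    (hbr : ∀ t ∈ Finset.Icc 1 T,
      ∑ i, p t i * R i (θ t) = ⨆ θ' : Θ, ∑ i, p t i * R i θ') :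
    sInf {v : ℝ | ∃ q : Fin I → ℝ, (∀ i, 0 ≤ q i) ∧ ∑ i, q i = 1 ∧
        v = ⨆ θ' : Θ, ∑ i, q i * R i θ'}
      ≤ (⨆ θ' : Θ, ∑ i, ((1 / (T : ℝ)) * ∑ t ∈ Finset.Icc 1 T, p t i) * R i θ')
    ∧ (⨆ θ' : Θ, ∑ i, ((1 / (T : ℝ)) * ∑ t ∈ Finset.Icc 1 T, p t i) * R i θ')
      ≤ (1 / (T : ℝ)) * ∑ t ∈ Finset.Icc 1 T, ∑ i, p t i * R i (θ t)
    ∧ (1 / (T : ℝ)) * ∑ t ∈ Finset.Icc 1 T, ∑ i, p t i * R i (θ t)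
      ≤ sInf {v : ℝ | ∃ q : Fin I → ℝ, (∀ i, 0 ≤ q i) ∧ ∑ i, q i = 1 ∧
          v = ⨆ θ' : Θ, ∑ i, q i * R i θ'} + ε :=
  hedge_minimax_value_approximation_general I hI Θ M hM R hR ε hε0 η hη T hT θ w p hw0 hw hp hbr
end

section
/- The negative entropy is 1-strongly convex on the interior of the simplex with respect to the ℓ1 norm: let I be a positive integer and let p, q ∈ ℝ^I satisfy p_i > 0, q_i > 0 for all i, Σ_{i=1}^I p_i = 1, and Σ_{i=1}^I q_i = 1. With Φ(x) = Σ_{i=1}^I x_i·log(x_i), one has Φ(q) − Φ(p) ≤ Σ_{i=1}^I (q_i − p_i)·(1 + log(q_i)) − (1/2)·(Σ_{i=1}^I |p_i − q_i|)². -/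
/-!
The Bregman divergence of `Φ` is `Σ (p log (p / q) - p + q)`, so the claim is Pinsker's inequality.
It follows from the pointwise bound `x log (x / y) - x + y ≥ (x - y)² / (2 w)` with
`w = (x + 2 y) / 3`, a Padé-type lower bound for `log`, summed over the coordinates and combined
with the Cauchy–Schwarz inequality `(Σ |p - q|)² ≤ (Σ w) · Σ (p - q)² / w`, where `Σ w = 1`.
-/

open Finset Real

lemma le_of_hasDerivAt_nonpos_of_nonneg {f f' : ℝ → ℝ} {a b t : ℝ} (hba : b < a) (hbt : b < t)
    (hf : ∀ x, b < x → HasDerivAt f (f' x) x)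
    (hf'_left : ∀ x, b < x → x < a → f' x ≤ 0) (hf'_right : ∀ x, a < x → 0 ≤ f' x) :
    f a ≤ f t := by
  have hcont : ContinuousOn f (Set.Ioi b) := fun x hx => (hf x hx).continuousAt.continuousWithinAt
  rcases le_or_gt a t with hat | hta
  · have hmono : MonotoneOn f (Set.Ici a) := by
      refine monotoneOn_of_hasDerivWithinAt_nonneg (f' := f') (convex_Ici a)
        (hcont.mono fun x hx => hba.trans_le hx) (fun x hx => ?_) (fun x hx => ?_) <;>
        rw [interior_Ici] at hx
      · exact (hf x (hba.trans hx)).hasDerivWithinAt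
      · exact hf'_right x hx
    exact hmono Set.self_mem_Ici hat hat
  · have hanti : AntitoneOn f (Set.Icc t a) := by
      refine antitoneOn_of_hasDerivWithinAt_nonpos (f' := f') (convex_Icc t a)
        (hcont.mono fun x hx => hbt.trans_le hx.1) (fun x hx => ?_) (fun x hx => ?_) <;>
        rw [interior_Icc] at hx
      · exact (hf x (hbt.trans hx.1)).hasDerivWithinAt
      · exact hf'_left x (hbt.trans hx.1) hx.2
    exact hanti ⟨le_rfl, hta.le⟩ ⟨hta.le, le_rfl⟩ hta.le

lemma hasDerivAt_log_sub_pade {t : ℝ} (ht : 0 < t) :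
    HasDerivAt (fun s => log s - (s - 1) * (5 * s + 1) / (2 * s * (s + 2)))
      (4 * (t - 1) ^ 3 / (2 * t * (t + 2)) ^ 2) t := by
  have hnum : HasDerivAt (fun s : ℝ => (s - 1) * (5 * s + 1)) ((5 * t + 1) + (t - 1) * 5) t := by
    simpa using ((hasDerivAt_id' t).sub_const 1).fun_mul (((hasDerivAt_id' t).const_mul 5).add_const 1)
  have hden : HasDerivAt (fun s : ℝ => 2 * s * (s + 2)) (2 * (t + 2) + 2 * t) t := by
    simpa using ((hasDerivAt_id' t).const_mul 2).fun_mul ((hasDerivAt_id' t).add_const 2)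
  refine ((hasDerivAt_log ht.ne').sub (hnum.div hden (by positivity))).congr_deriv ?_
  field_simp
  ring

lemma pade_le_log {t : ℝ} (ht : 0 < t) : (t - 1) * (5 * t + 1) / (2 * t * (t + 2)) ≤ log t := by
  have h := le_of_hasDerivAt_nonpos_of_nonneg one_pos ht (fun x hx => hasDerivAt_log_sub_pade hx)
    (fun x hx hx1 => div_nonpos_of_nonpos_of_nonneg
      (mul_nonpos_of_nonneg_of_nonpos (by norm_num) (Odd.pow_nonpos (by decide) (by linarith)))
      (sq_nonneg _))
    (fun x hx => div_nonneg (mul_nonneg (by norm_num) (pow_nonneg (by linarith) 3)) (sq_nonneg _))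
  simpa using h

lemma three_mul_sq_sub_div_le_mul_log_div_sub_add {x y : ℝ} (hx : 0 < x) (hy : 0 < y) :
    3 * (x - y) ^ 2 / (2 * (x + 2 * y)) ≤ x * log (x / y) - x + y := by
  have key : x * ((x / y - 1) * (5 * (x / y) + 1) / (2 * (x / y) * (x / y + 2))) - x + y
      = 3 * (x - y) ^ 2 / (2 * (x + 2 * y)) := by
    field_simp
    ring
  have := mul_le_mul_of_nonneg_left (pade_le_log (div_pos hx hy)) hx.le
  linarith

theorem Finset.three_mul_sq_sum_abs_sub_div_le_sum_mul_log_div_sub_add {ι : Type*}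
    (s : Finset ι) {p q : ι → ℝ} (hp : ∀ i ∈ s, 0 < p i) (hq : ∀ i ∈ s, 0 < q i) :
    3 * (∑ i ∈ s, |p i - q i|) ^ 2 / (2 * (∑ i ∈ s, p i + 2 * ∑ i ∈ s, q i))
      ≤ ∑ i ∈ s, (p i * log (p i / q i) - p i + q i) := by
  have hw : ∀ i ∈ s, 0 < 2 * (p i + 2 * q i) / 3 := fun i hi => by
    have := hp i hi; have := hq i hi; positivity
  calc 3 * (∑ i ∈ s, |p i - q i|) ^ 2 / (2 * (∑ i ∈ s, p i + 2 * ∑ i ∈ s, q i))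
      = (∑ i ∈ s, |p i - q i|) ^ 2 / ∑ i ∈ s, 2 * (p i + 2 * q i) / 3 := by
        rw [← sum_div, ← mul_sum, sum_add_distrib, ← mul_sum, div_div_eq_mul_div, mul_comm]
    _ ≤ ∑ i ∈ s, |p i - q i| ^ 2 / (2 * (p i + 2 * q i) / 3) := sq_sum_div_le_sum_sq_div s _ hw
    _ = ∑ i ∈ s, 3 * (p i - q i) ^ 2 / (2 * (p i + 2 * q i)) := by
        refine sum_congr rfl fun i _ => ?_
        rw [sq_abs, div_div_eq_mul_div, mul_comm]
    _ ≤ ∑ i ∈ s, (p i * log (p i / q i) - p i + q i) := sum_le_sum fun i hi =>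
        three_mul_sq_sub_div_le_mul_log_div_sub_add (hp i hi) (hq i hi)

theorem negEntropy_strongly_convex_general
    (I : ℕ) (p q : Fin I → ℝ)
    (hp0 : ∀ i, 0 < p i) (hp1 : ∑ i, p i = 1)
    (hq0 : ∀ i, 0 < q i) (hq1 : ∑ i, q i = 1) :
    (∑ i, q i * Real.log (q i)) - ∑ i, p i * Real.log (p i)
      ≤ (∑ i, (q i - p i) * (1 + Real.log (q i)))
        - (1 / 2) * (∑ i, |p i - q i|) ^ 2 := by
  have pinsker := univ.three_mul_sq_sum_abs_sub_div_le_sum_mul_log_div_sub_add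
    (fun i _ => hp0 i) (fun i _ => hq0 i)
  rw [hp1, hq1] at pinsker
  have bregman : ∑ i, (p i * log (p i / q i) - p i + q i)
      = (∑ i, (q i - p i) * (1 + log (q i))) - ∑ i, q i * log (q i) + ∑ i, p i * log (p i) := by
    rw [← sum_sub_distrib, ← sum_add_distrib]
    refine sum_congr rfl fun i _ => ?_
    rw [log_div (hp0 i).ne' (hq0 i).ne']
    ring
  linarith

/-- The negative entropy `Φ(x) = Σ_i x_i log x_i` is 1-strongly convex on the
interior of the simplex with respect to the ℓ1 norm:
`Φ(q) − Φ(p) ≤ Σ_i (q_i − p_i)(1 + log q_i) − (1/2)(Σ_i |p_i − q_i|)²`. -/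
theorem negEntropy_strongly_convex
    (I : ℕ) (hI : 0 < I) (p q : Fin I → ℝ)
    (hp0 : ∀ i, 0 < p i) (hp1 : ∑ i, p i = 1)
    (hq0 : ∀ i, 0 < q i) (hq1 : ∑ i, q i = 1) :
    (∑ i, q i * Real.log (q i)) - ∑ i, p i * Real.log (p i)
      ≤ (∑ i, (q i - p i) * (1 + Real.log (q i)))
        - (1 / 2) * (∑ i, |p i - q i|) ^ 2 :=
  negEntropy_strongly_convex_general I p q hp0 hp1 hq0 hq1
end

section
/- Bound on the regret risk of threshold treatment rules: let σ > 0 and k ≥ 0, and let Φ denote the cumulative distribution function of the standard normal distribution. For c ∈ [−k, k] and (μ, μ*) ∈ ℝ² with |μ − μ*| ≤ k, define the regret risk ρ(c, μ, μ*) = μ*·(𝟙{μ* ≥ 0} − Φ((μ − c)/σ)). Then 0 ≤ ρ(c, μ, μ*) ≤ σ·sup_{x ≥ 0} x·Φ(2k/σ − x), and the supremum on the right-hand side is finite. -/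
/-!
Writing `a = μ*`, the symmetry `Φ (-z) = 1 - Φ z` turns the regret into `|a| · Φ(g/σ)` for a
signed gap `g` which `c ∈ [-k, k]` and `|μ - μ*| ≤ k` bound by `2k - |a|`; with `x = |a|/σ` this
is `σ · x · Φ(2k/σ - x)`. Finiteness of the supremum is Markov's inequality:
`x · P(Z ≤ t - x) ≤ E|t - Z|` for `x ≥ 0`.
-/

open MeasureTheory ProbabilityTheory Set

theorem cdf_neg_of_map_neg {μ : Measure ℝ} [IsProbabilityMeasure μ] [NullSingletonClass μ]
    (hμ : μ.map (fun x ↦ -x) = μ) (z : ℝ) : cdf μ (-z) = 1 - cdf μ z := by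
  rw [cdf_eq_real, cdf_eq_real, ← probReal_compl_eq_one_sub measurableSet_Iic, compl_Iic,
    measureReal_congr Ioi_ae_eq_Ici]
  conv_lhs => rw [← hμ]
  rw [map_measureReal_apply (by fun_prop) measurableSet_Iic]
  exact congrArg μ.real (ext fun _ ↦ neg_le_neg_iff (α := ℝ))

theorem cdf_gaussianReal_neg {v : NNReal} (hv : v ≠ 0) (z : ℝ) :
    cdf (gaussianReal 0 v) (-z) = 1 - cdf (gaussianReal 0 v) z :=
  have := nullSingletonClass_gaussianReal (μ := 0) hv
  cdf_neg_of_map_neg (by rw [gaussianReal_map_neg, neg_zero]) z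

theorem mul_cdf_sub_le_integral_abs {μ : Measure ℝ} [IsProbabilityMeasure μ]
    (hμ : Integrable id μ) (t : ℝ) {x : ℝ} (hx : 0 ≤ x) :
    x * cdf μ (t - x) ≤ ∫ z, |t - z| ∂μ := by
  rw [cdf_eq_real]
  calc x * μ.real (Iic (t - x)) ≤ x * μ.real {z | x ≤ |t - z|} := by
        refine mul_le_mul_of_nonneg_left (measureReal_mono fun z hz ↦ ?_) hx
        exact (le_sub_comm.mp (mem_Iic.mp hz)).trans (le_abs_self _)
    _ ≤ ∫ z, |t - z| ∂μ :=
        mul_meas_ge_le_integral_of_nonneg (ae_of_all _ fun _ ↦ abs_nonneg _)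
          ((integrable_const t).sub hμ).abs x

theorem bddAbove_mul_cdf_sub {μ : Measure ℝ} [IsProbabilityMeasure μ]
    (hμ : Integrable id μ) (t : ℝ) :
    BddAbove {y : ℝ | ∃ x : ℝ, 0 ≤ x ∧ y = x * cdf μ (t - x)} :=
  ⟨∫ z, |t - z| ∂μ, by rintro _ ⟨x, hx, rfl⟩; exact mul_cdf_sub_le_integral_abs hμ t hx⟩

theorem integrable_id_gaussianReal (m : ℝ) (v : NNReal) : Integrable id (gaussianReal m v) :=
  (memLp_id_gaussianReal 1).integrable le_rfl

theorem mul_indicator_sub_eq_abs_mul {Φ : ℝ → ℝ} (hΦ : ∀ z, Φ (-z) = 1 - Φ z) (a z : ℝ) :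
    a * ((if 0 ≤ a then (1 : ℝ) else 0) - Φ z) = |a| * Φ (if 0 ≤ a then -z else z) := by
  split_ifs with ha
  · rw [abs_of_nonneg ha, hΦ]
  · rw [abs_of_neg (not_le.mp ha)]
    ring

theorem signed_gap_le {k c μ μs : ℝ} (hc : c ∈ Set.Icc (-k) k) (hμ : |μ - μs| ≤ k) :
    (if 0 ≤ μs then -(μ - c) else μ - c) ≤ 2 * k - |μs| := by
  obtain ⟨hc₁, hc₂⟩ := hc
  obtain ⟨hμ₁, hμ₂⟩ := abs_le.mp hμ
  split_ifs with hs
  · rw [abs_of_nonneg hs]; linarith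
  · rw [abs_of_neg (not_le.mp hs)]; linarith

theorem mul_indicator_sub_le {Φ : ℝ → ℝ} (hsymm : ∀ z, Φ (-z) = 1 - Φ z) (hmono : Monotone Φ)
    {σ k c μ μs : ℝ} (hσ : 0 < σ) (hc : c ∈ Set.Icc (-k) k) (hμ : |μ - μs| ≤ k) :
    μs * ((if 0 ≤ μs then (1 : ℝ) else 0) - Φ ((μ - c) / σ))
      ≤ σ * (|μs| / σ * Φ (2 * k / σ - |μs| / σ)) := by
  have hgap : (if 0 ≤ μs then -((μ - c) / σ) else (μ - c) / σ) ≤ 2 * k / σ - |μs| / σ := by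
    rw [← neg_div, ← apply_ite (· / σ), ← sub_div]
    exact div_le_div_of_nonneg_right (signed_gap_le hc hμ) hσ.le
  rw [mul_indicator_sub_eq_abs_mul hsymm, ← mul_assoc, mul_div_cancel₀ _ hσ.ne']
  exact mul_le_mul_of_nonneg_left (hmono hgap) (abs_nonneg _)

theorem threshold_rule_regret_bound_general
    (σ k : ℝ) (hσ : 0 < σ)
    (Φ : ℝ → ℝ) (hΦ : ∀ x, Φ x = ProbabilityTheory.cdf (gaussianReal 0 1) x)
    (c μ μs : ℝ) (hc : c ∈ Set.Icc (-k) k) (hμ : |μ - μs| ≤ k) :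
    0 ≤ μs * ((if 0 ≤ μs then (1 : ℝ) else 0) - Φ ((μ - c) / σ))
    ∧ μs * ((if 0 ≤ μs then (1 : ℝ) else 0) - Φ ((μ - c) / σ))
        ≤ σ * sSup {y : ℝ | ∃ x : ℝ, 0 ≤ x ∧ y = x * Φ (2 * k / σ - x)}
    ∧ BddAbove {y : ℝ | ∃ x : ℝ, 0 ≤ x ∧ y = x * Φ (2 * k / σ - x)} := by
  obtain rfl : Φ = cdf (gaussianReal 0 1) := funext hΦ
  have hsymm := cdf_gaussianReal_neg one_ne_zero
  have hbdd := bddAbove_mul_cdf_sub (integrable_id_gaussianReal 0 1) (2 * k / σ)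
  refine ⟨?_, (mul_indicator_sub_le hsymm (monotone_cdf _) hσ hc hμ).trans ?_, hbdd⟩
  · rw [mul_indicator_sub_eq_abs_mul hsymm]
    exact mul_nonneg (abs_nonneg _) (cdf_nonneg _ _)
  · exact mul_le_mul_of_nonneg_left (le_csSup hbdd ⟨_, by positivity, rfl⟩) hσ.le

/-- Bound on the regret risk of threshold treatment rules: with `Φ` the
standard normal CDF, `c ∈ [−k,k]`, and `|μ − μ*| ≤ k`, the regret risk
`ρ(c,μ,μ*) = μ*·(𝟙{μ* ≥ 0} − Φ((μ−c)/σ))` satisfies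
`0 ≤ ρ(c,μ,μ*) ≤ σ · sup_{x ≥ 0} x·Φ(2k/σ − x)`, and the supremum is finite. -/
theorem threshold_rule_regret_bound
    (σ k : ℝ) (hσ : 0 < σ) (hk : 0 ≤ k)
    (Φ : ℝ → ℝ) (hΦ : ∀ x, Φ x = ProbabilityTheory.cdf (gaussianReal 0 1) x)
    (c μ μs : ℝ) (hc : c ∈ Set.Icc (-k) k) (hμ : |μ - μs| ≤ k) :
    0 ≤ μs * ((if 0 ≤ μs then (1 : ℝ) else 0) - Φ ((μ - c) / σ))
    ∧ μs * ((if 0 ≤ μs then (1 : ℝ) else 0) - Φ ((μ - c) / σ))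
        ≤ σ * sSup {y : ℝ | ∃ x : ℝ, 0 ≤ x ∧ y = x * Φ (2 * k / σ - x)}
    ∧ BddAbove {y : ℝ | ∃ x : ℝ, 0 ≤ x ∧ y = x * Φ (2 * k / σ - x)} :=
  threshold_rule_regret_bound_general σ k hσ Φ hΦ c μ μs hc hμ
end

section
/- Characterization of nature's worst case over μ* for mixtures of threshold rules: let σ > 0, k > 0, let I be a positive integer, let c_1,…,c_I ∈ ℝ, let p be in the simplex Δ = {p ∈ ℝ^I : p_i ≥ 0, Σ_i p_i = 1}, and fix μ ∈ ℝ. Let Φ denote the standard normal cumulative distribution function, set A = Σ_{i=1}^I p_i·Φ((μ − c_i)/σ), and define g(μ*) = μ*·(𝟙{μ* ≥ 0} − A) for μ* ∈ [μ − k, μ + k]. If (μ + k)/(2k) ≥ A, then g(μ + k) ≥ g(μ*) for every μ* ∈ [μ − k, μ + k]; if (μ + k)/(2k) ≤ A, then g(μ − k) ≥ g(μ*) for every μ* ∈ [μ − k, μ + k]. -/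
open Finset ProbabilityTheory

/-- Characterization of nature's worst case over `μ*` for mixtures of
threshold rules: with `Φ` the standard normal CDF,
`A = Σ_i p_i Φ((μ − c_i)/σ)` and `g(μ*) = μ*·(𝟙{μ* ≥ 0} − A)` on
`[μ − k, μ + k]`: if `(μ+k)/(2k) ≥ A` then `g` is maximized at `μ + k`;
if `(μ+k)/(2k) ≤ A` then `g` is maximized at `μ − k`. -/
theorem nature_worst_case_mixture_threshold
    (σ k : ℝ) (hσ : 0 < σ) (hk : 0 < k)
    (I : ℕ) (hI : 0 < I) (c : Fin I → ℝ)
    (p : Fin I → ℝ) (hp0 : ∀ i, 0 ≤ p i) (hp1 : ∑ i, p i = 1)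
    (μ : ℝ)
    (Φ : ℝ → ℝ) (hΦ : ∀ x, Φ x = ProbabilityTheory.cdf (gaussianReal 0 1) x)
    (A : ℝ) (hA : A = ∑ i, p i * Φ ((μ - c i) / σ))
    (g : ℝ → ℝ) (hg : ∀ μs, g μs = μs * ((if 0 ≤ μs then (1 : ℝ) else 0) - A)) :
    ((μ + k) / (2 * k) ≥ A →
      ∀ μs ∈ Set.Icc (μ - k) (μ + k), g μs ≤ g (μ + k))
    ∧ ((μ + k) / (2 * k) ≤ A →
      ∀ μs ∈ Set.Icc (μ - k) (μ + k), g μs ≤ g (μ - k)) := by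
  have hΦ01 : ∀ x, 0 ≤ Φ x ∧ Φ x ≤ 1 := by
    intro x
    rw [hΦ x]
    exact ⟨ProbabilityTheory.cdf_nonneg _ _, ProbabilityTheory.cdf_le_one _ _⟩
  have hA0 : 0 ≤ A := by
    rw [hA]
    apply Finset.sum_nonneg
    intro i _
    exact mul_nonneg (hp0 i) (hΦ01 _).1
  have hA1 : A ≤ 1 := by
    rw [hA, ← hp1]
    apply Finset.sum_le_sum
    intro i _
    calc p i * Φ ((μ - c i) / σ) ≤ p i * 1 := by
          exact mul_le_mul_of_nonneg_left (hΦ01 _).2 (hp0 i)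
      _ = p i := by ring
  have h2k : (0:ℝ) < 2 * k := by linarith
  constructor
  · intro hcond μs hμs
    obtain ⟨h1, h2⟩ := hμs
    have hb : 2 * k * A ≤ μ + k := by
      rw [ge_iff_le, le_div_iff₀ h2k] at hcond
      linarith [hcond]
    have hbnn : 0 ≤ μ + k := by nlinarith
    rw [hg, hg, if_pos hbnn]
    by_cases h0 : 0 ≤ μs
    · rw [if_pos h0]; nlinarith
    · rw [if_neg h0]; push_neg at h0; nlinarith
  · intro hcond μs hμs
    obtain ⟨h1, h2⟩ := hμs
    have hb : μ + k ≤ 2 * k * A := by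
      rw [div_le_iff₀ h2k] at hcond
      linarith [hcond]
    rw [hg, hg]
    by_cases ha : 0 ≤ μ - k
    · rw [if_pos ha]
      have hA1' : (1:ℝ) ≤ A := by nlinarith
      have : A = 1 := le_antisymm hA1 hA1'
      by_cases h0 : 0 ≤ μs
      · rw [if_pos h0]; nlinarith
      · rw [if_neg h0]; push_neg at h0; nlinarith
    · rw [if_neg ha]; push_neg at ha
      by_cases h0 : 0 ≤ μs
      · rw [if_pos h0]; nlinarith
      · rw [if_neg h0]; push_neg at h0; nlinarith
end
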